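/- Let {φ_j}_{j=1}^{n₁} and {ψ_j}_{j=1}^{n₂} be ETFs for F^{d₁}, F^{d₂} with d₁ = (n₁ − √n₁)/2, d₂ = (n₂ − √n₂)/2, with Naimark complements {φ̃_j}, {ψ̃_j}. Then {(φ_j ⊗ ψ̃_{j'}) ⊕ (φ̃_j ⊗ ψ_{j'})} (over all j, j') is an ETF of n₁n₂ vectors for F^{d₃} where d₃ = (n₁n₂ − √(n₁n₂))/2, and {(φ_j ⊗ ψ_{j'}) ⊕ (φ̃_j ⊗ ψ̃_{j'})} is a Naimark-complementary ETF for F^{n₁n₂ − d₃}. -/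

import Mathlib

/-!
Write `G = Φ*Φ`, `H = Ψ*Ψ` for the Gram matrices. The rows of `Φ` and `Φ̃` together form a
scaled orthonormal basis, so `Φ̃*Φ̃ = n₁ - G`, and likewise for `Ψ`. The Gram matrix of the first
new family is `G ⊗ (n₂ - H) + (n₁ - G) ⊗ H`; off the diagonal its entries are `(n₁ - 2d₁) H`,
`(n₂ - 2d₂) G` or `-2 G ⊗ H`. Since `n - 2d = √n`, and equality in the Welch bound forces
`|G_{jk}| = √n₁/2` and `|H_{jk}| = √n₂/2`, all of them have modulus `√(n₁n₂)/2`. The second family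
has Gram matrix `G ⊗ H + (n₁ - G) ⊗ (n₂ - H)` and is handled in the same way after swapping `Ψ`
and `Ψ̃`. Tightness and orthogonality of the two families are block computations with
`(A ⊗ B)(C ⊗ D)* = AC* ⊗ BD*`.
-/

open Matrix
open scoped ComplexOrder Kronecker

theorem abs_sub_two_mul_eq_sqrt {n d : ℝ} (hd : d = (n - √n) / 2) : |n - 2 * d| = 2 * (√n / 2) := by
  rw [hd, show n - 2 * ((n - √n) / 2) = 2 * (√n / 2) by ring, abs_of_nonneg (by positivity)]

theorem le_of_eq_sub_sqrt_div_two {n d : ℕ} (hd : (d : ℝ) = (n - √n) / 2) : d ≤ n := by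
  exact_mod_cast (show (d : ℝ) ≤ n by rw [hd]; linarith [Real.sqrt_nonneg n])

namespace Matrix

section CommSemiring

variable {R l l' m m' n n' p p' : Type*} [CommSemiring R]

theorem smul_one_kronecker_smul_one [DecidableEq l] [DecidableEq m] (a b : R) :
    (a • 1 : Matrix l l R) ⊗ₖ (b • 1 : Matrix m m R) = (a * b) • 1 := by
  rw [smul_kronecker, kronecker_smul, one_kronecker_one, smul_smul]

theorem fromBlocks_smul_one [DecidableEq m] [DecidableEq m'] (c : R) :
    fromBlocks (c • 1 : Matrix m m R) 0 0 (c • 1 : Matrix m' m' R) = c • 1 := by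
  rw [← fromBlocks_one, fromBlocks_smul, smul_zero, smul_zero]

variable [StarRing R]

theorem kronecker_mul_conjTranspose_kronecker [Fintype m] [Fintype n] (A : Matrix l m R)
    (B : Matrix l' n R) (C : Matrix p m R) (D : Matrix p' n R) :
    A ⊗ₖ B * (C ⊗ₖ D)ᴴ = (A * Cᴴ) ⊗ₖ (B * Dᴴ) := by
  rw [conjTranspose_kronecker, mul_kronecker_mul]

theorem conjTranspose_kronecker_mul_kronecker [Fintype l] [Fintype l'] (A : Matrix l m R)
    (B : Matrix l' n R) (C : Matrix l p R) (D : Matrix l' p' R) :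
    (A ⊗ₖ B)ᴴ * C ⊗ₖ D = (Aᴴ * C) ⊗ₖ (Bᴴ * D) := by
  rw [conjTranspose_kronecker, mul_kronecker_mul]

theorem fromRows_mul_conjTranspose_fromRows [Fintype n] (A : Matrix m n R) (B : Matrix m' n R)
    (C : Matrix p n R) (D : Matrix p' n R) :
    fromRows A B * (fromRows C D)ᴴ = fromBlocks (A * Cᴴ) (A * Dᴴ) (B * Cᴴ) (B * Dᴴ) := by
  rw [conjTranspose_fromRows_eq_fromCols_conjTranspose, fromRows_mul_fromCols]

theorem conjTranspose_fromRows_mul_fromRows [Fintype m] [Fintype m'] (A : Matrix m n R)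
    (B : Matrix m' n R) (C : Matrix m p R) (D : Matrix m' p R) :
    (fromRows A B)ᴴ * fromRows C D = Aᴴ * C + Bᴴ * D := by
  rw [conjTranspose_fromRows_eq_fromCols_conjTranspose, fromCols_mul_fromRows]

theorem conjTranspose_fromRows_kronecker_mul_self [Fintype l] [Fintype l'] [Fintype m]
    [Fintype m'] (A : Matrix l n R) (B : Matrix l' n' R) (C : Matrix m n R) (D : Matrix m' n' R) :
    (fromRows (A ⊗ₖ B) (C ⊗ₖ D))ᴴ * fromRows (A ⊗ₖ B) (C ⊗ₖ D) =
      (Aᴴ * A) ⊗ₖ (Bᴴ * B) + (Cᴴ * C) ⊗ₖ (Dᴴ * D) := by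
  rw [conjTranspose_fromRows_mul_fromRows, conjTranspose_kronecker_mul_kronecker,
    conjTranspose_kronecker_mul_kronecker]

/-- `B` is a Naimark complement of `A`, both with frame constant `c`. -/
def IsNaimarkPair [Fintype n] [DecidableEq m] [DecidableEq m'] (A : Matrix m n R)
    (B : Matrix m' n R) (c : R) : Prop :=
  A * Aᴴ = c • 1 ∧ B * Bᴴ = c • 1 ∧ A * Bᴴ = 0

namespace IsNaimarkPair

variable [Fintype n] [DecidableEq m] [DecidableEq m']

theorem symm {A : Matrix m n R} {B : Matrix m' n R} {c : R} (h : IsNaimarkPair A B c) :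
    IsNaimarkPair B A c := by
  refine ⟨h.2.1, h.1, ?_⟩
  rw [← conjTranspose_conjTranspose B, ← conjTranspose_mul, h.2.2, conjTranspose_zero]

theorem fromRows_kronecker [Fintype n'] [DecidableEq p] [DecidableEq p'] {A : Matrix m n R}
    {At : Matrix m' n R} {B : Matrix p n' R} {Bt : Matrix p' n' R} {a b : R}
    (hA : IsNaimarkPair A At a) (hB : IsNaimarkPair B Bt b) :
    IsNaimarkPair (fromRows (A ⊗ₖ Bt) (At ⊗ₖ B)) (fromRows (A ⊗ₖ B) (At ⊗ₖ Bt)) (a * b) := by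
  obtain ⟨-, -, hAtA⟩ := hA.symm
  obtain ⟨-, -, hBtB⟩ := hB.symm
  obtain ⟨hAA, hAtAt, hAAt⟩ := hA
  obtain ⟨hBB, hBtBt, hBBt⟩ := hB
  refine ⟨?_, ?_, ?_⟩ <;>
    simp only [fromRows_mul_conjTranspose_fromRows, kronecker_mul_conjTranspose_kronecker, hAA,
      hAtAt, hAAt, hAtA, hBB, hBtBt, hBBt, hBtB, zero_kronecker, kronecker_zero,
      smul_one_kronecker_smul_one, fromBlocks_smul_one, fromBlocks_zero]

end IsNaimarkPair

end CommSemiring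

variable {𝕜 m m' n ι κ : Type*} [RCLike 𝕜]

theorem conjTranspose_mul_self_apply [Fintype m] (A : Matrix m n 𝕜) (j k : n) :
    (Aᴴ * A) j k = ∑ i, (starRingEnd 𝕜) (A i j) * A i k := by
  simp only [mul_apply, conjTranspose_apply, RCLike.star_def]

theorem conjTranspose_mul_self_apply_self [Fintype m] (A : Matrix m n 𝕜) (j : n) :
    (Aᴴ * A) j j = ((∑ i, ‖A i j‖ ^ 2 : ℝ) : 𝕜) := by
  simp only [conjTranspose_mul_self_apply, RCLike.conj_mul, RCLike.ofReal_sum, RCLike.ofReal_pow]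

theorem IsNaimarkPair.conjTranspose_mul_add_conjTranspose_mul [Fintype m] [Fintype m']
    [Fintype n] [DecidableEq m] [DecidableEq m'] [DecidableEq n] {A : Matrix m n 𝕜}
    {B : Matrix m' n 𝕜} {c : 𝕜} (h : IsNaimarkPair A B c)
    (hcard : Fintype.card m + Fintype.card m' = Fintype.card n) :
    Aᴴ * A + Bᴴ * B = c • 1 := by
  obtain ⟨-, -, hBA⟩ := h.symm
  obtain ⟨hA, hB, hAB⟩ := h
  rcases eq_or_ne c 0 with rfl | hc
  · rw [zero_smul, self_mul_conjTranspose_eq_zero] at hA hB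
    simp [hA, hB]
  have hM : fromRows A B * (c⁻¹ • (fromRows A B)ᴴ) = 1 := by
    rw [Matrix.mul_smul, fromRows_mul_conjTranspose_fromRows, hA, hB, hAB, hBA,
      fromBlocks_smul_one, smul_smul, inv_mul_cancel₀ hc, one_smul]
  replace hM := (mul_eq_one_comm_of_equiv
    (Fintype.equivOfCardEq (by rw [Fintype.card_sum, hcard]))).mp hM
  rw [Matrix.smul_mul, conjTranspose_fromRows_mul_fromRows] at hM
  rw [← hM, smul_smul, mul_inv_cancel₀ hc, one_smul]

def IsEquiangularGram (G : Matrix ι ι 𝕜) (d γ : ℝ) : Prop :=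
  (∀ j, G j j = d) ∧ ∀ j k, j ≠ k → ‖G j k‖ = γ

namespace IsEquiangularGram

theorem complement [DecidableEq ι] {G Gt : Matrix ι ι 𝕜} {n d γ : ℝ}
    (hG : G.IsEquiangularGram d γ) (hGt : G + Gt = (n : 𝕜) • 1) :
    Gt.IsEquiangularGram (n - d) γ := by
  obtain rfl : Gt = (n : 𝕜) • 1 - G := eq_sub_of_add_eq' hGt
  refine ⟨fun j => ?_, fun j k hjk => ?_⟩
  · simp [hG.1 j, Algebra.smul_def]
  · simp [hjk, hG.2 j k hjk]

theorem sq_add_card_sub_one_mul_sq_eq_mul [Fintype m] [DecidableEq m] [Fintype n]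
    [DecidableEq n] [Nonempty n] {A : Matrix m n 𝕜} {a d γ : ℝ} (hA : A * Aᴴ = (a : 𝕜) • 1)
    (hG : (Aᴴ * A).IsEquiangularGram d γ) :
    d ^ 2 + (Fintype.card n - 1) * γ ^ 2 = a * d := by
  obtain ⟨j⟩ := ‹Nonempty n›
  have hGG : (Aᴴ * A) * (Aᴴ * A) = (a : 𝕜) • (Aᴴ * A) := by
    rw [Matrix.mul_assoc, ← Matrix.mul_assoc A, hA]
    simp
  have hcol : ∑ k, ‖(Aᴴ * A) k j‖ ^ 2 = a * d := by
    have h := congrFun (congrFun hGG j) j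
    simp only [mul_apply (M := Aᴴ * A), smul_apply, hG.1 j, smul_eq_mul,
      ← (isHermitian_conjTranspose_mul_self A).apply j, RCLike.star_def, RCLike.conj_mul] at h
    exact_mod_cast h
  rwa [← Finset.add_sum_erase _ _ (Finset.mem_univ j), hG.1 j, RCLike.norm_ofReal, sq_abs,
    Finset.sum_congr rfl fun k hk => by rw [hG.2 k j (Finset.ne_of_mem_erase hk)],
    Finset.sum_const, Finset.card_erase_of_mem (Finset.mem_univ j), Finset.card_univ,
    nsmul_eq_mul, Nat.cast_pred Fintype.card_pos] at hcol

theorem eq_sqrt_div_two [Fintype m] [DecidableEq m] {N : ℕ} {A : Matrix m (Fin N) 𝕜} {d γ : ℝ}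
    (hA : A * Aᴴ = (N : 𝕜) • 1) (hG : (Aᴴ * A).IsEquiangularGram d γ)
    (hd : d = (N - √N) / 2) {j k : Fin N} (hjk : j ≠ k) : γ = √N / 2 := by
  have : Nonempty (Fin N) := ⟨j⟩
  have hwelch := sq_add_card_sub_one_mul_sq_eq_mul (a := N) (by rwa [RCLike.ofReal_natCast]) hG
  rw [Fintype.card_fin, hd] at hwelch
  have hN : (2 : ℝ) ≤ N := mod_cast Fin.nontrivial_iff_two_le.mp ⟨j, k, hjk⟩
  have hs : √N ^ 2 = (N : ℝ) := Real.sq_sqrt N.cast_nonneg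
  have key : ((N : ℝ) - 1) * (γ ^ 2 - (√N / 2) ^ 2) = 0 := by
    linear_combination hwelch - ((N : ℝ) / 4) * hs
  have hγ : 0 ≤ γ := hG.2 j k hjk ▸ norm_nonneg _
  have hγsq : γ ^ 2 = (√N / 2) ^ 2 :=
    sub_eq_zero.mp ((mul_eq_zero.mp key).resolve_left (by linarith))
  exact (sq_eq_sq₀ hγ (by positivity)).mp hγsq

theorem kronecker_add_kronecker [DecidableEq ι] [DecidableEq κ]
    {G Gt : Matrix ι ι 𝕜} {H Ht : Matrix κ κ 𝕜} {n₁ n₂ d₁ d₂ γ₁ γ₂ : ℝ}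
    (hG : G.IsEquiangularGram d₁ γ₁) (hH : H.IsEquiangularGram d₂ γ₂)
    (hGt : G + Gt = (n₁ : 𝕜) • 1) (hHt : H + Ht = (n₂ : 𝕜) • 1)
    (hγ₁ : |n₁ - 2 * d₁| = 2 * γ₁) (hγ₂ : |n₂ - 2 * d₂| = 2 * γ₂) :
    (G ⊗ₖ Ht + Gt ⊗ₖ H).IsEquiangularGram (d₁ * (n₂ - d₂) + (n₁ - d₁) * d₂) (2 * γ₁ * γ₂) := by
  obtain rfl : Gt = (n₁ : 𝕜) • 1 - G := eq_sub_of_add_eq' hGt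
  obtain rfl : Ht = (n₂ : 𝕜) • 1 - H := eq_sub_of_add_eq' hHt
  have entry : ∀ j j' k k', (G ⊗ₖ ((n₂ : 𝕜) • 1 - H) + ((n₁ : 𝕜) • 1 - G) ⊗ₖ H :
      Matrix (ι × κ) (ι × κ) 𝕜) (j, j') (k, k') =
      G j k * ((n₂ : 𝕜) * (1 : Matrix κ κ 𝕜) j' k' - H j' k') +
        ((n₁ : 𝕜) * (1 : Matrix ι ι 𝕜) j k - G j k) * H j' k' := fun _ _ _ _ => rfl
  refine ⟨fun ⟨j, j'⟩ => ?_, fun ⟨j, j'⟩ ⟨k, k'⟩ hne => ?_⟩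
  · rw [entry, one_apply_eq, one_apply_eq, hG.1, hH.1]
    push_cast
    ring
  rcases eq_or_ne j k with rfl | hjk <;> rcases eq_or_ne j' k' with rfl | hjk'
  · exact absurd rfl hne
  · calc _ = ‖((n₁ - 2 * d₁ : ℝ) : 𝕜) * H j' k'‖ := by
          rw [entry, one_apply_eq, one_apply_ne hjk', hG.1]; push_cast; ring_nf
      _ = 2 * γ₁ * γ₂ := by rw [norm_mul, RCLike.norm_ofReal, hγ₁, hH.2 _ _ hjk']
  · calc _ = ‖((n₂ - 2 * d₂ : ℝ) : 𝕜) * G j k‖ := by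
          rw [entry, one_apply_eq, one_apply_ne hjk, hH.1]; push_cast; ring_nf
      _ = 2 * γ₁ * γ₂ := by rw [norm_mul, RCLike.norm_ofReal, hγ₂, hG.2 _ _ hjk]; ring
  · calc _ = ‖2 * (G j k * H j' k')‖ := by
          rw [entry, one_apply_ne hjk, one_apply_ne hjk', ← norm_neg]; ring_nf
      _ = 2 * γ₁ * γ₂ := by
          rw [norm_mul, norm_mul, RCLike.norm_two, hG.2 _ _ hjk, hH.2 _ _ hjk']; ring

end IsEquiangularGram

theorem isEquiangularGram_conjTranspose_mul_self [Fintype m] [DecidableEq m] {N : ℕ} {d : ℝ}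
    (hd : d = (N - √N) / 2) {A : Matrix m (Fin N) 𝕜} (hA : A * Aᴴ = (N : 𝕜) • 1)
    (hnorm : ∀ j, ∑ i, ‖A i j‖ ^ 2 = d)
    (hang : ∃ γ : ℝ, ∀ j j', j ≠ j' → ‖∑ i, (starRingEnd 𝕜) (A i j) * A i j'‖ = γ) :
    (Aᴴ * A).IsEquiangularGram d (√N / 2) := by
  obtain ⟨γ, hγ⟩ := hang
  have hG : (Aᴴ * A).IsEquiangularGram d γ :=
    ⟨fun j => by rw [conjTranspose_mul_self_apply_self, hnorm],
      fun j k hjk => by rw [conjTranspose_mul_self_apply, hγ j k hjk]⟩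
  exact ⟨hG.1, fun j k hjk => (hG.2 j k hjk).trans (hG.eq_sqrt_div_two hA hd hjk)⟩

end Matrix

theorem tensor_etf {𝕜 : Type*} [RCLike 𝕜] (d₁ d₂ n₁ n₂ : ℕ)
    (hd₁ : (d₁ : ℝ) = ((n₁ : ℝ) - Real.sqrt n₁) / 2)
    (hd₂ : (d₂ : ℝ) = ((n₂ : ℝ) - Real.sqrt n₂) / 2)
    (Φ : Matrix (Fin d₁) (Fin n₁) 𝕜) (Φt : Matrix (Fin (n₁ - d₁)) (Fin n₁) 𝕜)
    (Ψ : Matrix (Fin d₂) (Fin n₂) 𝕜) (Ψt : Matrix (Fin (n₂ - d₂)) (Fin n₂) 𝕜)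
    (hΦ : Φ * Φ.conjTranspose = (n₁ : 𝕜) • 1)
    (hΦt : Φt * Φt.conjTranspose = (n₁ : 𝕜) • 1)
    (hΦΦt : Φ * Φt.conjTranspose = 0)
    (hΦnorm : ∀ j, ∑ i, ‖Φ i j‖ ^ 2 = (d₁ : ℝ))
    (hΦang : ∃ γ : ℝ, ∀ j j', j ≠ j' → ‖∑ i, (starRingEnd 𝕜) (Φ i j) * Φ i j'‖ = γ)
    (hΨ : Ψ * Ψ.conjTranspose = (n₂ : 𝕜) • 1)
    (hΨt : Ψt * Ψt.conjTranspose = (n₂ : 𝕜) • 1)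
    (hΨΨt : Ψ * Ψt.conjTranspose = 0)
    (hΨnorm : ∀ j, ∑ i, ‖Ψ i j‖ ^ 2 = (d₂ : ℝ))
    (hΨang : ∃ γ : ℝ, ∀ j j', j ≠ j' → ‖∑ i, (starRingEnd 𝕜) (Ψ i j) * Ψ i j'‖ = γ) :
    (let Θ : Matrix ((Fin d₁ × Fin (n₂ - d₂)) ⊕ (Fin (n₁ - d₁) × Fin d₂))
        (Fin n₁ × Fin n₂) 𝕜 := fun w c =>
          match w with
          | Sum.inl (a, e) => Φ a c.1 * Ψt e c.2
          | Sum.inr (a, e) => Φt a c.1 * Ψ e c.2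
     let Θ' : Matrix ((Fin d₁ × Fin d₂) ⊕ (Fin (n₁ - d₁) × Fin (n₂ - d₂)))
        (Fin n₁ × Fin n₂) 𝕜 := fun w c =>
          match w with
          | Sum.inl (a, e) => Φ a c.1 * Ψ e c.2
          | Sum.inr (a, e) => Φt a c.1 * Ψt e c.2
     ((d₁ * (n₂ - d₂) + (n₁ - d₁) * d₂ : ℕ) : ℝ) =
        ((n₁ * n₂ : ℕ) - Real.sqrt (n₁ * n₂ : ℕ)) / 2 ∧
     Θ * Θ.conjTranspose = ((n₁ * n₂ : ℕ) : 𝕜) • 1 ∧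
     Θ' * Θ'.conjTranspose = ((n₁ * n₂ : ℕ) : 𝕜) • 1 ∧
     Θ * Θ'.conjTranspose = 0 ∧
     (∀ c, ∑ w, ‖Θ w c‖ ^ 2 = ((d₁ * (n₂ - d₂) + (n₁ - d₁) * d₂ : ℕ) : ℝ)) ∧
     (∃ γ : ℝ, ∀ c c', c ≠ c' → ‖∑ w, (starRingEnd 𝕜) (Θ w c) * Θ w c'‖ = γ) ∧
     (∃ γ : ℝ, ∀ c c', c ≠ c' → ‖∑ w, (starRingEnd 𝕜) (Θ' w c) * Θ' w c'‖ = γ)) := by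
  intro Θ Θ'
  have hΘ : Θ = fromRows (Φ ⊗ₖ Ψt) (Φt ⊗ₖ Ψ) := by ext (⟨a, e⟩ | ⟨a, e⟩) c <;> rfl
  have hΘ' : Θ' = fromRows (Φ ⊗ₖ Ψ) (Φt ⊗ₖ Ψt) := by ext (⟨a, e⟩ | ⟨a, e⟩) c <;> rfl
  have hd₁n := le_of_eq_sub_sqrt_div_two hd₁
  have hd₂n := le_of_eq_sub_sqrt_div_two hd₂
  have hΦpair : IsNaimarkPair Φ Φt (n₁ : 𝕜) := ⟨hΦ, hΦt, hΦΦt⟩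
  have hΨpair : IsNaimarkPair Ψ Ψt (n₂ : 𝕜) := ⟨hΨ, hΨt, hΨΨt⟩
  have hGt : Φᴴ * Φ + Φtᴴ * Φt = ((n₁ : ℝ) : 𝕜) • 1 := by
    simpa using hΦpair.conjTranspose_mul_add_conjTranspose_mul (by simp [hd₁n])
  have hHt : Ψᴴ * Ψ + Ψtᴴ * Ψt = ((n₂ : ℝ) : 𝕜) • 1 := by
    simpa using hΨpair.conjTranspose_mul_add_conjTranspose_mul (by simp [hd₂n])
  have hG := isEquiangularGram_conjTranspose_mul_self hd₁ hΦ hΦnorm hΦang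
  have hH := isEquiangularGram_conjTranspose_mul_self hd₂ hΨ hΨnorm hΨang
  have hΘgram := hG.kronecker_add_kronecker hH hGt hHt (abs_sub_two_mul_eq_sqrt hd₁)
    (abs_sub_two_mul_eq_sqrt hd₂)
  have hΘ'gram := hG.kronecker_add_kronecker (hH.complement hHt) hGt ((add_comm _ _).trans hHt)
    (abs_sub_two_mul_eq_sqrt hd₁) (by rw [← abs_sub_two_mul_eq_sqrt hd₂, ← abs_neg]; ring_nf)
  rw [← conjTranspose_fromRows_kronecker_mul_self] at hΘgram hΘ'gram
  obtain ⟨hΘΘ, hΘ'Θ', hΘΘ'⟩ := hΦpair.fromRows_kronecker hΨpair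
  rw [← Nat.cast_mul] at hΘΘ hΘ'Θ'
  have hdim : ((d₁ * (n₂ - d₂) + (n₁ - d₁) * d₂ : ℕ) : ℝ) =
      d₁ * (n₂ - d₂) + (n₁ - d₁) * d₂ := by push_cast [hd₁n, hd₂n]; ring
  simp only [← conjTranspose_mul_self_apply, hΘ, hΘ']
  refine ⟨?_, hΘΘ, hΘ'Θ', hΘΘ', fun c => ?_, ⟨_, hΘgram.2⟩, ⟨_, hΘ'gram.2⟩⟩
  · rw [hdim, Nat.cast_mul, Real.sqrt_mul (Nat.cast_nonneg _), hd₁, hd₂]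
    ring
  · rw [hdim]
    exact_mod_cast (conjTranspose_mul_self_apply_self _ c).symm.trans (hΘgram.1 c)
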